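/- In the Warden's Game on S ⊆ T(n,k) (closed under rotations) with goal α, from any position γb ∈ S, if a is the greatest value less than b with aγ ∈ S, then an optimal move for the warden is either to move to aγ or to pass; i.e., moving to cγ for c < a is never strictly better for the warden. -/

import Mathlib

namespace UCG

abbrev Str (n k : ℕ) := Fin n → Fin k

def OneUp {n k : ℕ} (β γ : Str n k) : Prop :=
  ∃ i : Fin n, β i < γ i ∧ ∀ j : Fin n, j ≠ i → β j = γ j

def IncrTo {n k : ℕ} (S : Set (Str n k)) (β α : Str n k) : Prop :=
  β ∈ S ∧ Relation.ReflTransGen (fun x y => OneUp x y ∧ y ∈ S) β α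

def IsRotation {n k : ℕ} (β γ : Str n k) : Prop :=
  ∃ j : ℕ, ∀ i : Fin n, γ i = β ⟨(i.val + j) % n, Nat.mod_lt _ i.pos⟩

def ClosedUnderRot {n k : ℕ} (S : Set (Str n k)) : Prop :=
  ∀ β ∈ S, ∀ γ, IsRotation β γ → γ ∈ S

def shift {n k : ℕ} (c : Fin k) (β : Str n k) : Str n k :=
  fun i => if i.val = 0 then c else β ⟨i.val - 1, lt_of_le_of_lt (Nat.sub_le _ _) i.isLt⟩

def lastSym {n k : ℕ} (hn : 0 < n) (β : Str n k) : Fin k :=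
  β ⟨n - 1, Nat.sub_lt hn one_pos⟩

/-- `WinIn hn S tgt β m`: in the Warden's Game with legal positions `S`, starting
from position `β`, the prisoner can force the position `tgt` to be reached within
at most `m` moves, whatever the warden does.  A move from `β = γb` is either a
warden move to `cγ ∈ S` with `c < b`, or (if the warden passes) a prisoner move
to `cγ ∈ S` with `c ≥ b`. -/
inductive WinIn {n k : ℕ} (hn : 0 < n) (S : Set (Str n k)) (tgt : Str n k) :
    Str n k → ℕ → Prop
  | passWin (β : Str n k) (m : ℕ) (c : Fin k)
      (hc : lastSym hn β ≤ c) (hcS : shift c β ∈ S) (heq : shift c β = tgt)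
      (hW : ∀ c' : Fin k, c' < lastSym hn β → shift c' β ∈ S → shift c' β ≠ tgt →
        WinIn hn S tgt (shift c' β) m) :
      WinIn hn S tgt β (m + 1)
  | passStep (β : Str n k) (m : ℕ) (c : Fin k)
      (hc : lastSym hn β ≤ c) (hcS : shift c β ∈ S)
      (hwin : WinIn hn S tgt (shift c β) m)
      (hW : ∀ c' : Fin k, c' < lastSym hn β → shift c' β ∈ S → shift c' β ≠ tgt →
        WinIn hn S tgt (shift c' β) m) :
      WinIn hn S tgt β (m + 1)

noncomputable def remoteness {n k : ℕ} (hn : 0 < n) (S : Set (Str n k))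
    (tgt β : Str n k) : ℕ∞ :=
  sInf {e : ℕ∞ | ∃ t : ℕ, e = t ∧ WinIn hn S tgt β t}

def fshift {n k : ℕ} (b : Fin k) (β : Str n k) : Str n k :=
  fun i => if h : i.val = n - 1 then b else β ⟨i.val + 1, by have := i.isLt; omega⟩

def GreedyOk {n k : ℕ} (S : Set (Str n k)) (B : ℕ → Option (Str n k)) (m : ℕ)
    (β : Str n k) (b : Fin k) : Prop :=
  fshift b β ∈ S ∧ ∀ i : ℕ, 1 ≤ i → i ≤ m → B i ≠ some (fshift b β)

def IsGreedy {n k : ℕ} (S : Set (Str n k)) (α : Str n k)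
    (B : ℕ → Option (Str n k)) : Prop :=
  B 0 = some α ∧
  (∀ m : ℕ, B m = none → B (m + 1) = none) ∧
  ∀ m : ℕ, ∀ β : Str n k, B m = some β →
    ((1 ≤ m ∧ β = α) → B (m + 1) = none) ∧
    ((m = 0 ∨ β ≠ α) →
      ((¬ ∃ b : Fin k, GreedyOk S B m β b) → B (m + 1) = none) ∧
      (∀ b : Fin k, GreedyOk S B m β b → (∀ b' : Fin k, b' < b → ¬ GreedyOk S B m β b') →
        B (m + 1) = some (fshift b β)))

def CycSubstr {m n k : ℕ} (hn : 0 < n) (γ : Str m k) (β : Str n k) : Prop :=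
  ∃ j : ℕ, ∀ i : Fin m, β ⟨(j + i.val) % n, Nat.mod_lt _ hn⟩ = γ i

/-! The key fact is that on a rotation-closed set `S` no two positions share a finite
remoteness. Granting it, let `q = γa`: it lies in `S` as a rotation of `aγ`. If the warden's
best move from `p = γb` went to `cγ` with `c < a`, then from `q` the same move is available,
every other warden move from `q` is one from `p`, and the prisoner may answer a pass at `q` by
moving to `aγ`, which is no worse than the warden's move there from `p`. So `r(q) = r(p)`,
forcing `q = p`, which is absurd as `a < b`.

Injectivity is proved by induction on the remoteness `t`. The value of a position reached by a
move is its remoteness, or `0` at the goal. Two positions of remoteness `t`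
each have a child of value `t - 1`, which by induction is the same child, so they share the
prefix `γ`. Two siblings `γb`, `γb'` with `b < b'` are then ruled out. From `γb` the prisoner
can move to `bγ` (in `S` by rotation) and to his best answer `dγ` at `γb'`; both have value at
most `t - 1` and, being distinct, different values. So `r(γb) = t` is forced by a warden move to
some `cγ` of value `t - 1` with `c < b`, and `bγ`, `dγ` have smaller values. But following
optimal play downwards from `cγ` through every smaller remoteness shows that at most one
sibling above `c` has a value below that of `cγ`. -/

lemma eq_add_one_of_le_add_one_of_not_le {A : Type*} [LinearOrder A] [Add A] [One A]
    [SuccAddOrder A] {x y : A} (h₁ : x ≤ y + 1) (h₂ : ¬ x ≤ y) : x = y + 1 :=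
  le_antisymm h₁ (Order.add_one_le_of_lt (not_le.mp h₂))

section Strings

variable {n k : ℕ}

lemma shift_apply_zero (hn : 0 < n) (c : Fin k) (β : Str n k) : shift c β ⟨0, hn⟩ = c := by
  simp [shift]

lemma eq_of_shift_eq_shift (hn : 0 < n) {c c' : Fin k} {β β' : Str n k}
    (h : shift c β = shift c' β') : c = c' := by
  simpa [shift] using congrFun h ⟨0, hn⟩

lemma shift_eq_shift_of_shift_eq {c c' : Fin k} {β β' : Str n k}
    (h : shift c β = shift c' β') (z : Fin k) : shift z β = shift z β' := by
  funext i
  by_cases hi : i.val = 0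
  · simp [shift, hi]
  · simpa [shift, hi] using congrFun h i

lemma eq_of_shift_eq_shift_of_lastSym_eq (hn : 0 < n) {c : Fin k} {β β' : Str n k}
    (h : shift c β = shift c β') (hl : lastSym hn β = lastSym hn β') : β = β' := by
  funext i
  by_cases hi : i.val = n - 1
  · obtain rfl : i = ⟨n - 1, Nat.sub_lt hn one_pos⟩ := Fin.ext hi
    exact hl
  · simpa [shift] using congrFun h ⟨i.val + 1, by omega⟩

lemma lastSym_fshift (hn : 0 < n) (a : Fin k) (β : Str n k) : lastSym hn (fshift a β) = a := by
  simp [lastSym, fshift]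

lemma shift_fshift_shift (z a c : Fin k) (β : Str n k) :
    shift z (fshift a (shift c β)) = shift z β := by
  funext i
  by_cases hi : i.val = 0
  · simp [shift, hi]
  · have : i.val - 1 ≠ n - 1 := by omega
    simp [shift, fshift, hi, this]

lemma isRotation_shift_lastSym (hn : 0 < n) (β : Str n k) :
    IsRotation β (shift (lastSym hn β) β) := by
  refine ⟨n - 1, fun i => ?_⟩
  by_cases hi : i.val = 0
  · simp [shift, hi, lastSym, Nat.mod_eq_of_lt (Nat.sub_lt hn one_pos)]
  · simp only [shift, hi, if_false]
    congr 1
    ext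
    dsimp only
    rw [show i.val + (n - 1) = i.val - 1 + n by omega, Nat.add_mod_right,
      Nat.mod_eq_of_lt (by omega)]

lemma isRotation_fshift (hn : 0 < n) (β : Str n k) : IsRotation β (fshift (β ⟨0, hn⟩) β) := by
  refine ⟨1, fun i => ?_⟩
  by_cases hi : i.val = n - 1
  · simp only [fshift, hi, dite_true]
    congr 1
    ext
    dsimp only
    rw [show n - 1 + 1 = n by omega, Nat.mod_self]
  · simp only [fshift, hi, dite_false]
    congr 1
    ext
    dsimp only
    rw [Nat.mod_eq_of_lt (by omega)]

end Strings

section Game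

variable {n k : ℕ} {hn : 0 < n} {S : Set (Str n k)} {α : Str n k}

local notation "𝓡" => remoteness hn S α

lemma not_winIn_zero {β : Str n k} : ¬ WinIn hn S α β 0 := nofun

lemma WinIn.mono {β : Str n k} {m m' : ℕ} (h : WinIn hn S α β m) (hle : m ≤ m') :
    WinIn hn S α β m' := by
  induction h generalizing m' with
  | passWin β m c hc hcS heq _ ih =>
    obtain ⟨m', rfl⟩ : ∃ m'', m' = m'' + 1 := ⟨m' - 1, by omega⟩
    exact .passWin β m' c hc hcS heq fun c' h₁ h₂ h₃ => ih c' h₁ h₂ h₃ (by omega)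
  | passStep β m c hc hcS _ _ ihwin ih =>
    obtain ⟨m', rfl⟩ : ∃ m'', m' = m'' + 1 := ⟨m' - 1, by omega⟩
    exact .passStep β m' c hc hcS (ihwin (by omega)) fun c' h₁ h₂ h₃ => ih c' h₁ h₂ h₃ (by omega)

lemma winIn_succ_iff {β : Str n k} {s : ℕ} :
    WinIn hn S α β (s + 1) ↔
      (∃ z, lastSym hn β ≤ z ∧ shift z β ∈ S ∧ (shift z β = α ∨ WinIn hn S α (shift z β) s)) ∧
        ∀ z < lastSym hn β, shift z β ∈ S → shift z β ≠ α → WinIn hn S α (shift z β) s := by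
  constructor
  · rintro (⟨_, _, c, hc, hcS, heq, hW⟩ | ⟨_, _, c, hc, hcS, hwin, hW⟩)
    · exact ⟨⟨c, hc, hcS, .inl heq⟩, hW⟩
    · exact ⟨⟨c, hc, hcS, .inr hwin⟩, hW⟩
  · rintro ⟨⟨z, hz, hzS, heq | hwin⟩, hW⟩
    · exact .passWin β s z hz hzS heq hW
    · exact .passStep β s z hz hzS hwin hW

lemma remoteness_le_iff {β : Str n k} {t : ℕ} : 𝓡 β ≤ t ↔ WinIn hn S α β t := by
  refine ⟨fun h => ?_, fun h => sInf_le ⟨t, rfl, h⟩⟩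
  by_contra hw
  have : ((t + 1 : ℕ) : ℕ∞) ≤ 𝓡 β := by
    refine le_sInf ?_
    rintro _ ⟨s, rfl, hs⟩
    exact_mod_cast Nat.succ_le_of_lt (not_le.mp fun hst => hw (hs.mono hst))
  exact absurd (this.trans h) (by exact_mod_cast (by omega : ¬ t + 1 ≤ t))

lemma remoteness_ne_zero {β : Str n k} : 𝓡 β ≠ 0 := fun h =>
  not_winIn_zero (remoteness_le_iff.mp (h.trans Nat.cast_zero.symm).le)

/-- Unlike `remoteness`, this vanishes at the goal: the game ends as soon as a move reaches it. -/
noncomputable def moveValue (hn : 0 < n) (S : Set (Str n k)) (α β : Str n k) : ℕ∞ :=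
  if β = α then 0 else remoteness hn S α β

local notation "𝓥" => moveValue hn S α

lemma moveValue_le_iff {β : Str n k} {u : ℕ} : 𝓥 β ≤ u ↔ β = α ∨ WinIn hn S α β u := by
  unfold moveValue
  split_ifs with h <;> simp [h, remoteness_le_iff]

lemma moveValue_eq_iff_of_ne_zero {β : Str n k} {s : ℕ∞} (hs : s ≠ 0) :
    𝓥 β = s ↔ β ≠ α ∧ 𝓡 β = s := by
  unfold moveValue
  split_ifs with h <;> simp [h, hs.symm]

lemma moveValue_eq_zero_iff {β : Str n k} : 𝓥 β = 0 ↔ β = α := by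
  unfold moveValue
  split_ifs with h <;> simp [h, remoteness_ne_zero]

lemma moveValue_of_ne {β : Str n k} (h : β ≠ α) : 𝓥 β = 𝓡 β := if_neg h

lemma remoteness_le_add_one_iff {β : Str n k} {u : ℕ} :
    𝓡 β ≤ u + 1 ↔
      (∃ z, lastSym hn β ≤ z ∧ shift z β ∈ S ∧ 𝓥 (shift z β) ≤ u) ∧
        ∀ z < lastSym hn β, shift z β ∈ S → 𝓥 (shift z β) ≤ u := by
  rw [← Nat.cast_add_one, remoteness_le_iff, winIn_succ_iff]
  simp only [moveValue_le_iff, or_iff_not_imp_left]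

lemma exists_moveValue_eq_of_remoteness_eq {β : Str n k} {s : ℕ} (h : 𝓡 β = s + 1) :
    ∃ z, shift z β ∈ S ∧ 𝓥 (shift z β) = s := by
  obtain ⟨⟨z, hbz, hzS, hz⟩, hwarden⟩ := remoteness_le_add_one_iff.mp h.le
  cases s with
  | zero => exact ⟨z, hzS, by simpa using hz⟩
  | succ s =>
    have hnot : ¬ 𝓡 β ≤ (s : ℕ∞) + 1 := by
      rw [h]; exact_mod_cast (by omega : ¬ s + 1 + 1 ≤ s + 1)
    rw [remoteness_le_add_one_iff, not_and_or] at hnot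
    push_cast at hz hwarden ⊢
    rcases hnot with hprisoner | hwarden'
    · push Not at hprisoner
      exact ⟨z, hzS, eq_add_one_of_le_add_one_of_not_le hz (not_le.mpr (hprisoner z hbz hzS))⟩
    · push Not at hwarden'
      obtain ⟨w, hw, hwS, hwv⟩ := hwarden'
      exact ⟨w, hwS, eq_add_one_of_le_add_one_of_not_le (hwarden w hw hwS) (not_le.mpr hwv)⟩

lemma exists_remoteness_eq_of_le {γ : Str n k} {m u : ℕ} (hγ : γ ∈ S) (h : 𝓡 γ = m)
    (hu : u ≠ 0) (hum : u ≤ m) : ∃ Q ∈ S, 𝓡 Q = u := by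
  induction m generalizing γ with
  | zero => omega
  | succ m ih =>
    rcases hum.eq_or_lt with rfl | hlt
    · exact ⟨γ, hγ, h⟩
    obtain ⟨z, hzS, hz⟩ := exists_moveValue_eq_of_remoteness_eq (h.trans (Nat.cast_succ m))
    have hzr := ((moveValue_eq_iff_of_ne_zero (by exact_mod_cast (by omega : m ≠ 0))).mp hz).2
    exact ih hzS hzr (by omega)

lemma injOn_moveValue {t : ℕ∞} (ih : Set.InjOn 𝓡 {β | β ∈ S ∧ 𝓡 β < t}) :
    Set.InjOn 𝓥 {β | β ∈ S ∧ 𝓥 β < t} := by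
  rintro β ⟨hβ, hβt⟩ β' ⟨hβ', -⟩ h
  by_cases h0 : 𝓥 β = 0
  · exact (moveValue_eq_zero_iff.mp h0).trans (moveValue_eq_zero_iff.mp (h ▸ h0)).symm
  obtain ⟨-, hr⟩ := (moveValue_eq_iff_of_ne_zero h0).mp rfl
  obtain ⟨-, hr'⟩ := (moveValue_eq_iff_of_ne_zero h0).mp h.symm
  exact ih ⟨hβ, hr ▸ hβt⟩ ⟨hβ', hr' ▸ hβt⟩ (hr.trans hr'.symm)

/-- Optimal play from `cP` passes through a position `Q` of remoteness `v + 1`, where `v` is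
the value of `xP`. By induction its child of value `v` is `xP`, so `Q = Pq` is a sibling, and
`q ≤ c` as otherwise the warden could move from `Q` to `cP`. Since `xP` is the only sibling of
value `v` and lies above `q`, the prisoner's options at `Q`, which include `yP`, all have value
at least `v`. -/
lemma moveValue_le_moveValue_of_lt {P : Str n k} {c x y : Fin k} {m : ℕ}
    (ih : Set.InjOn 𝓡 {β | β ∈ S ∧ 𝓡 β < m}) (hcS : shift c P ∈ S) (hc : 𝓥 (shift c P) = m)
    (hcx : c < x) (hcy : c < y) (hxS : shift x P ∈ S) (hyS : shift y P ∈ S)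
    (hx : 𝓥 (shift x P) < m) : 𝓥 (shift x P) ≤ 𝓥 (shift y P) := by
  by_contra! hyx
  have hinj := injOn_moveValue ih
  obtain ⟨u, hu⟩ : ∃ u : ℕ, 𝓥 (shift x P) = u + 1 := by
    obtain ⟨v, hv⟩ := ENat.ne_top_iff_exists.mp (hx.trans (ENat.natCast_lt_top m)).ne
    obtain ⟨u, rfl⟩ : ∃ u, v = u + 1 :=
      Nat.exists_eq_succ_of_ne_zero (by rintro rfl; exact not_lt_zero (hv ▸ hyx))
    exact ⟨u, by rw [← hv]; push_cast; rfl⟩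
  have hum : u + 2 ≤ m := by exact_mod_cast hu ▸ hx
  have hcr := ((moveValue_eq_iff_of_ne_zero (by exact_mod_cast (by omega : m ≠ 0))).mp hc).2
  obtain ⟨Q, -, hQ⟩ := exists_remoteness_eq_of_le hcS hcr (by omega) hum
  obtain ⟨z, hzS, hz⟩ := exists_moveValue_eq_of_remoteness_eq (hQ.trans (Nat.cast_succ _))
  have hQP : ∀ w, shift w Q = shift w P := shift_eq_shift_of_shift_eq
    (hinj ⟨hzS, hz ▸ by exact_mod_cast (by omega : u + 1 < m)⟩ ⟨hxS, hx⟩ (hz.trans (by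
      rw [hu]; push_cast; rfl)))
  obtain ⟨-, hwarden⟩ := remoteness_le_add_one_iff.mp (hQ.trans (by push_cast; rfl)).le
  simp only [hQP] at hwarden
  have hqc : lastSym hn Q ≤ c := not_lt.mp fun hcq =>
    absurd (hc ▸ hwarden c hcq hcS) (by exact_mod_cast (by omega : ¬ m ≤ u + 1))
  have hnot : ¬ 𝓡 Q ≤ (u : ℕ∞) + 1 := by
    rw [hQ]; exact_mod_cast (by omega : ¬ u + 2 ≤ u + 1)
  rw [remoteness_le_add_one_iff, not_and_or] at hnot
  simp only [hQP] at hnot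
  rcases hnot with hprisoner | hwarden'
  · exact hprisoner ⟨y, hqc.trans hcy.le, hyS, (ENat.lt_add_one_iff (ENat.natCast_ne_top u)).mp
      (hu ▸ hyx)⟩
  · push Not at hwarden'
    obtain ⟨w, hwq, hwS, hwv⟩ := hwarden'
    have hw : 𝓥 (shift w P) = u + 1 :=
      eq_add_one_of_le_add_one_of_not_le (hwarden w hwq hwS) (not_le.mpr hwv)
    have hwx : w = x := eq_of_shift_eq_shift hn
      (hinj ⟨hwS, hw ▸ hu ▸ hx⟩ ⟨hxS, hx⟩ (hw.trans hu.symm))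
    exact absurd (hwx ▸ hwq) (not_lt.mpr (hqc.trans hcx.le))

lemma eq_of_moveValue_lt {P : Str n k} {c x y : Fin k} {m : ℕ}
    (ih : Set.InjOn 𝓡 {β | β ∈ S ∧ 𝓡 β < m}) (hcS : shift c P ∈ S) (hc : 𝓥 (shift c P) = m)
    (hcx : c < x) (hcy : c < y) (hxS : shift x P ∈ S) (hyS : shift y P ∈ S)
    (hx : 𝓥 (shift x P) < m) (hy : 𝓥 (shift y P) < m) : x = y :=
  eq_of_shift_eq_shift hn <| injOn_moveValue ih ⟨hxS, hx⟩ ⟨hyS, hy⟩ <| le_antisymm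
    (moveValue_le_moveValue_of_lt ih hcS hc hcx hcy hxS hyS hx)
    (moveValue_le_moveValue_of_lt ih hcS hc hcy hcx hyS hxS hy)

lemma not_remoteness_eq_of_lastSym_lt (hS : ClosedUnderRot S) {β β' : Str n k} {t : ℕ}
    (ih : Set.InjOn 𝓡 {β | β ∈ S ∧ 𝓡 β < t}) (hβ : β ∈ S)
    (hpre : ∀ z, shift z β' = shift z β) (hlt : lastSym hn β < lastSym hn β')
    (h : 𝓡 β = t) (h' : 𝓡 β' = t) : False := by
  obtain ⟨s, rfl⟩ : ∃ s, t = s + 1 :=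
    Nat.exists_eq_succ_of_ne_zero (by rintro rfl; exact remoteness_ne_zero h)
  set b := lastSym hn β
  have hinj := injOn_moveValue ih
  have hbS : shift b β ∈ S := hS _ hβ _ (isRotation_shift_lastSym hn β)
  obtain ⟨-, hwarden⟩ := remoteness_le_add_one_iff.mp (h.trans (Nat.cast_succ s)).le
  obtain ⟨⟨p, hbp, hpS, hp⟩, hwarden'⟩ :=
    remoteness_le_add_one_iff.mp (h'.trans (Nat.cast_succ s)).le
  simp only [hpre] at hpS hp hwarden'
  have hb : 𝓥 (shift b β) ≤ s := hwarden' b hlt hbS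
  have hbp : b < p := hlt.trans_le hbp
  have hlt_succ {z : Fin k} (hz : 𝓥 (shift z β) ≤ s) : 𝓥 (shift z β) < (s + 1 : ℕ) :=
    hz.trans_lt (by exact_mod_cast Nat.lt_succ_self s)
  have hne : 𝓥 (shift b β) ≠ 𝓥 (shift p β) := fun he =>
    hbp.ne (eq_of_shift_eq_shift hn (hinj ⟨hbS, hlt_succ hb⟩ ⟨hpS, hlt_succ hp⟩ he))
  cases s with
  | zero => exact hne ((nonpos_iff_eq_zero.mp hb).trans (nonpos_iff_eq_zero.mp hp).symm)
  | succ s =>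
    have hnot : ¬ 𝓡 β ≤ (s : ℕ∞) + 1 := by
      rw [h]; exact_mod_cast (by omega : ¬ s + 1 + 1 ≤ s + 1)
    rw [remoteness_le_add_one_iff, not_and_or] at hnot
    push_cast at hb hp hwarden hlt_succ
    rcases hnot with hprisoner | hforced
    · push Not at hprisoner
      exact hne ((eq_add_one_of_le_add_one_of_not_le hb (not_le.mpr (hprisoner b le_rfl hbS))).trans
        (eq_add_one_of_le_add_one_of_not_le hp (not_le.mpr (hprisoner p hbp.le hpS))).symm)
    · push Not at hforced
      obtain ⟨c, hcb, hcS, hcv⟩ := hforced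
      have hc : 𝓥 (shift c β) = (s + 1 : ℕ) := by
        push_cast; exact eq_add_one_of_le_add_one_of_not_le (hwarden c hcb hcS) (not_le.mpr hcv)
      have hbelow {z : Fin k} (hcz : c < z) (hzS : shift z β ∈ S) (hz : 𝓥 (shift z β) ≤ s + 1) :
          𝓥 (shift z β) < (s + 1 : ℕ) :=
        (by exact_mod_cast hz : 𝓥 (shift z β) ≤ (s + 1 : ℕ)).lt_of_ne fun he => hcz.ne
          (eq_of_shift_eq_shift hn (hinj ⟨hcS, hc ▸ hlt_succ hc.le⟩ ⟨hzS, hlt_succ hz⟩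
            (hc.trans he.symm)))
      have ih' : Set.InjOn 𝓡 {β | β ∈ S ∧ 𝓡 β < (s + 1 : ℕ)} := by
        refine ih.mono ?_
        rintro β ⟨hβ, hβs⟩
        exact ⟨hβ, hβs.trans (by exact_mod_cast Nat.lt_succ_self _)⟩
      exact hbp.ne (eq_of_moveValue_lt ih' hcS hc hcb (hcb.trans hbp) hbS hpS
        (hbelow hcb hbS hb) (hbelow (hcb.trans hbp) hpS hp))

lemma eq_of_remoteness_eq (hS : ClosedUnderRot S) {β β' : Str n k} {t : ℕ}
    (ih : Set.InjOn 𝓡 {β | β ∈ S ∧ 𝓡 β < t}) (hβ : β ∈ S) (hβ' : β' ∈ S)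
    (h : 𝓡 β = t) (h' : 𝓡 β' = t) : β = β' := by
  obtain ⟨s, rfl⟩ : ∃ s, t = s + 1 :=
    Nat.exists_eq_succ_of_ne_zero (by rintro rfl; exact remoteness_ne_zero h)
  obtain ⟨z, hzS, hz⟩ := exists_moveValue_eq_of_remoteness_eq (h.trans (Nat.cast_succ s))
  obtain ⟨z', hzS', hz'⟩ := exists_moveValue_eq_of_remoteness_eq (h'.trans (Nat.cast_succ s))
  have hlt : (s : ℕ∞) < (s + 1 : ℕ) := by exact_mod_cast Nat.lt_succ_self s
  have hpre : ∀ w, shift w β' = shift w β := shift_eq_shift_of_shift_eq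
    (injOn_moveValue ih ⟨hzS', hz' ▸ hlt⟩ ⟨hzS, hz ▸ hlt⟩ (hz'.trans hz.symm))
  rcases lt_trichotomy (lastSym hn β) (lastSym hn β') with hbb' | hbb' | hbb'
  · exact (not_remoteness_eq_of_lastSym_lt hS ih hβ hpre hbb' h h').elim
  · exact eq_of_shift_eq_shift_of_lastSym_eq hn (hpre z).symm hbb'
  · exact (not_remoteness_eq_of_lastSym_lt hS ih hβ' (fun w => (hpre w).symm) hbb' h' h).elim

theorem injOn_remoteness (hS : ClosedUnderRot S) : Set.InjOn 𝓡 {β | β ∈ S ∧ 𝓡 β ≠ ⊤} := by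
  have hlt : ∀ t : ℕ, Set.InjOn 𝓡 {β | β ∈ S ∧ 𝓡 β < t} := by
    intro t
    induction t with
    | zero => simp [Set.InjOn]
    | succ t ih =>
      rintro β ⟨hβ, hβt⟩ β' ⟨hβ', -⟩ h
      rcases ((ENat.lt_add_one_iff (ENat.natCast_ne_top t)).mp
        (hβt.trans_eq (Nat.cast_succ t))).lt_or_eq with hβt | hβt
      · exact ih ⟨hβ, hβt⟩ ⟨hβ', h ▸ hβt⟩ h
      · exact eq_of_remoteness_eq hS ih hβ hβ' hβt (h ▸ hβt)
  rintro β ⟨hβ, hβt⟩ β' ⟨hβ', -⟩ h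
  obtain ⟨t, ht⟩ := ENat.ne_top_iff_exists.mp hβt
  have : 𝓡 β < (t + 1 : ℕ) := by rw [← ht]; exact_mod_cast Nat.lt_succ_self t
  exact hlt (t + 1) ⟨hβ, this⟩ ⟨hβ', h ▸ this⟩ h

/-- The string `fshift a (shift a p)` is `p` with its last symbol replaced by `a`. -/
lemma remoteness_fshift_shift_eq {p : Str n k} {a c : Fin k} {m : ℕ}
    (ha : a < lastSym hn p) (haS : shift a p ∈ S) (hca : c < a) (hcS : shift c p ∈ S)
    (hc : 𝓥 (shift c p) = m) (hp : 𝓡 p = m + 1) : 𝓡 (fshift a (shift a p)) = m + 1 := by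
  have hq : ∀ z, shift z (fshift a (shift a p)) = shift z p := fun z => shift_fshift_shift z a a p
  obtain ⟨-, hwarden⟩ := remoteness_le_add_one_iff.mp hp.le
  refine eq_add_one_of_le_add_one_of_not_le ?_ ?_
  · rw [remoteness_le_add_one_iff, lastSym_fshift]
    simp only [hq]
    exact ⟨⟨a, le_rfl, haS, hwarden a ha haS⟩, fun z hz hzS => hwarden z (hz.trans ha) hzS⟩
  · cases m with
    | zero => simpa using remoteness_ne_zero
    | succ m =>
      rw [Nat.cast_succ, remoteness_le_add_one_iff, lastSym_fshift]
      simp only [hq]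
      rintro ⟨-, hwarden'⟩
      exact absurd (hc ▸ hwarden' c hca hcS) (by exact_mod_cast (by omega : ¬ m + 1 ≤ m))

end Game

/-- from a position `p = γb ∈ S`, if `a` is the greatest value below
`b` with `aγ ∈ S`, then any optimal decreasing warden move is to `aγ`: if moving to
`cγ` (with `c < b`) is optimal, i.e. `r(cγ) = m` where `r(γb) = m + 1`, then `c = a`. -/
theorem warden_optimal_decrement {n k : ℕ} (hn : 0 < n) (S : Set (Str n k))
    (hS : ClosedUnderRot S) (α : Str n k) (hα : α ∈ S)
    (p : Str n k) (hp : p ∈ S) (a : Fin k) (ha : a < lastSym hn p)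
    (haS : shift a p ∈ S)
    (hmax : ∀ c : Fin k, a < c → c < lastSym hn p → shift c p ∉ S)
    (c : Fin k) (hc : c < lastSym hn p) (hcS : shift c p ∈ S)
    (m : ℕ) (hrp : remoteness hn S α p = ((m + 1 : ℕ) : ℕ∞))
    (hrc : remoteness hn S α (shift c p) = (m : ℕ∞)) :
    c = a := by
  rcases lt_trichotomy c a with hca | rfl | hac
  · exfalso
    have hinj := injOn_remoteness (hn := hn) (α := α) hS
    rw [Nat.cast_succ] at hrp
    by_cases hcα : shift c p = α
    · have hm : (m : ℕ∞) ≠ 0 := by rintro hm; exact remoteness_ne_zero (hrc.trans hm)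
      obtain ⟨z, hzS, hz⟩ := exists_moveValue_eq_of_remoteness_eq hrp
      obtain ⟨hzα, hzr⟩ := (moveValue_eq_iff_of_ne_zero hm).mp hz
      rw [hcα] at hrc
      exact hzα (hinj ⟨hzS, by simp [hzr]⟩ ⟨hα, by simp [hrc]⟩ (hzr.trans hrc.symm))
    · have hq := remoteness_fshift_shift_eq ha haS hca hcS
        ((moveValue_of_ne hcα).trans hrc) hrp
      have hqp : fshift a (shift a p) = p := hinj
        ⟨hS _ haS _ (shift_apply_zero hn a p ▸ isRotation_fshift hn (shift a p)), by simp [hq]⟩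
        ⟨hp, by simp [hrp]⟩ (hq.trans hrp.symm)
      exact ha.ne (lastSym_fshift hn a (shift a p) ▸ congrArg (lastSym hn) hqp)
  · rfl
  · exact absurd hcS (hmax c hac hc)

end UCG
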